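/- arXiv:2404.17085 — 5 statements merged into one kernel-verified Lean document; each statement's English description precedes it below -/
import Mathlib

section
/- Let (Θ,w) be a weighted complex unit gain cycle C_n on n vertices with oriented edges e_1,...,e_n. Then det(L(Θ,w)) = (∏_{i=1}^n w(e_i)) · 2·(1 − Re(φ(C_n))), where φ(C_n) = φ(e_1)·φ(e_2)···φ(e_n) is the gain of the cycle. -/
open Matrix Complex BigOperators

/-- Laplacian of a weighted complex unit gain cycle on `n` vertices (`n ≥ 3`, enforced via
`[NeZero n]` plus a `3 ≤ n` hypothesis in the theorems), where the oriented edge `i` goes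
from vertex `i` to vertex `i+1` (indices mod `n`), carries gain `φ i` and weight `w i`. -/
noncomputable def cycleLap (n : ℕ) [NeZero n] (φ : Fin n → ℂ) (w : Fin n → ℝ) :
    Matrix (Fin n) (Fin n) ℂ := fun i j =>
  if i = j then ((w (i - 1) + w i : ℝ) : ℂ)
  else if j = i + 1 then -(φ i * (w i : ℂ))
  else if i = j + 1 then -((φ j)⁻¹ * (w j : ℂ))
  else 0

/-- Weighted incidence matrix of a weighted complex unit gain cycle on `n` vertices:
rows indexed by vertices, columns by the oriented edges `e : Fin n` (edge `e` goes from
vertex `e` to vertex `e+1`). -/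
noncomputable def cycleInc (n : ℕ) [NeZero n] (φ : Fin n → ℂ) (w : Fin n → ℝ) :
    Matrix (Fin n) (Fin n) ℂ := fun v e =>
  if v = e then (Real.sqrt (w e) : ℂ)
  else if v = e + 1 then -(φ e)⁻¹ * (Real.sqrt (w e) : ℂ)
  else 0

open scoped Fin.NatCast Fin.CommRing in
lemma perm_classify {n : ℕ} [NeZero n] (hn : 2 ≤ n) (σ : Equiv.Perm (Fin n))
    (h : ∀ e, σ e = e ∨ σ e = e + 1) : σ = 1 ∨ σ = Equiv.addRight 1 := by
  have h1 : (1 : Fin n) ≠ 0 := by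
    simp [Fin.ext_iff, Fin.val_one', Nat.mod_eq_of_lt (by omega : 1 < n)]
  by_cases hid : ∀ e, σ e = e
  · left; exact Equiv.ext hid
  · right
    push_neg at hid
    obtain ⟨e₀, he₀⟩ := hid
    have he₀' : σ e₀ = e₀ + 1 := (h e₀).resolve_left he₀
    have step : ∀ e, σ e = e + 1 → σ (e + 1) = e + 1 + 1 := by
      intro e he
      rcases h (e + 1) with h' | h'
      · exfalso
        have := σ.injective (he.trans h'.symm)
        exact h1 (by rwa [left_eq_add] at this)
      · exact h'
    have key : ∀ k : ℕ, σ (e₀ + (k : Fin n)) = e₀ + (k : Fin n) + 1 := by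
      intro k
      induction k with
      | zero => simpa using he₀'
      | succ m ih =>
        have : ((m + 1 : ℕ) : Fin n) = (m : Fin n) + 1 := by push_cast; ring
        rw [this, ← add_assoc]
        exact step _ ih
    refine Equiv.ext fun y => ?_
    have hy : e₀ + (((y - e₀).val : ℕ) : Fin n) = y := by
      rw [Fin.cast_val_eq_self]; ring
    have := key (y - e₀).val
    rw [hy] at this
    simpa using this


open scoped Fin.NatCast Fin.CommRing in
lemma cycleLap_eq_inc_mul {n : ℕ} [NeZero n] (hn : 3 ≤ n) (φ : Fin n → ℂ) (w : Fin n → ℝ)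
    (hφ : ∀ i, ‖φ i‖ = 1) (hw : ∀ i, 0 < w i) :
    cycleLap n φ w = cycleInc n φ w * (cycleInc n φ w)ᴴ := by
  have h1 : (1 : Fin n) ≠ 0 := by
    simp [Fin.ext_iff, Fin.val_one', Nat.mod_eq_of_lt (by omega : 1 < n)]
  have h2 : (2 : Fin n) ≠ 0 := by
    have h : ((2 : Fin n)) = ((2 : ℕ) : Fin n) := by norm_cast
    intro hc
    rw [h, Fin.ext_iff, Fin.val_cast_of_lt (by omega), Fin.val_zero] at hc
    omega
  have hφ0 : ∀ i, φ i ≠ 0 := by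
    intro i hz
    have := hφ i
    rw [hz] at this
    simp at this
  have hconjinv : ∀ i, (starRingEnd ℂ) (φ i)⁻¹ = φ i := by
    intro i
    rw [map_inv₀, ← Complex.inv_eq_conj (hφ i), inv_inv]
  have hss : ∀ i, (Real.sqrt (w i) : ℂ) * (Real.sqrt (w i) : ℂ) = (w i : ℂ) := by
    intro i
    rw [← Complex.ofReal_mul, Real.mul_self_sqrt (hw i).le]
  have hstarneg : ∀ i, star (-(φ i)⁻¹ * (Real.sqrt (w i) : ℂ)) = -(φ i) * (Real.sqrt (w i) : ℂ) := by
    intro i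
    rw [star_mul', star_neg]
    rw [show (star (φ i)⁻¹ : ℂ) = (starRingEnd ℂ) (φ i)⁻¹ from rfl, hconjinv]
    rw [show (star ((Real.sqrt (w i) : ℝ) : ℂ)) = (starRingEnd ℂ) ((Real.sqrt (w i) : ℝ) : ℂ) from rfl,
      Complex.conj_ofReal]
  have hstarre : ∀ i, star ((Real.sqrt (w i) : ℝ) : ℂ) = ((Real.sqrt (w i) : ℝ) : ℂ) := by
    intro i
    rw [show (star ((Real.sqrt (w i) : ℝ) : ℂ)) = (starRingEnd ℂ) ((Real.sqrt (w i) : ℝ) : ℂ) from rfl,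
      Complex.conj_ofReal]
  funext i j
  rw [Matrix.mul_apply]
  have hsub : i - 1 ≠ i := by
    intro hEq
    apply h1
    have h' : i - 1 + 1 = i + 1 := by rw [hEq]
    have h'' : i = i + 1 := by rw [← h']; ring
    exact left_eq_add.mp h'' 
  have htwo : ∀ a : Fin n, a + 1 ≠ a - 1 := by
    intro a hEq
    apply h2
    have h' : a + 1 + 1 = a - 1 + 1 := by rw [hEq]
    have h'' : a + 2 = a + 0 := by rw [show a + 2 = a + 1 + 1 from by ring, h']; ring
    exact add_left_cancel h''
  have hselfadd : ∀ a : Fin n, a + 1 ≠ a := by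
    intro a hEq
    exact h1 (by rwa [add_eq_left] at hEq)
  rw [Fintype.sum_eq_add (i - 1) i hsub ?_]
  · have hi1 : i = (i - 1) + 1 := by ring
    have hii : i ≠ i - 1 := fun h => hsub h.symm
    have hB1 : cycleInc n φ w i (i - 1) = -(φ (i-1))⁻¹ * (Real.sqrt (w (i-1)) : ℂ) := by
      simp only [cycleInc]
      rw [if_neg hii, if_pos hi1]
    have hB2 : cycleInc n φ w i i = (Real.sqrt (w i) : ℂ) := by simp [cycleInc]
    rw [Matrix.conjTranspose_apply, Matrix.conjTranspose_apply, hB1, hB2]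
    by_cases hij : i = j
    · subst hij
      rw [hB1, hB2, hstarneg, hstarre]
      have hL : cycleLap n φ w i i = ((w (i - 1) + w i : ℝ) : ℂ) := by simp [cycleLap]
      rw [hL]
      have : -(φ (i-1))⁻¹ * (Real.sqrt (w (i-1)) : ℂ) * (-(φ (i-1)) * (Real.sqrt (w (i-1)) : ℂ))
          + (Real.sqrt (w i) : ℂ) * (Real.sqrt (w i) : ℂ)
          = ((φ (i-1))⁻¹ * φ (i-1)) * ((Real.sqrt (w (i-1)) : ℂ) * (Real.sqrt (w (i-1)) : ℂ))
            + (Real.sqrt (w i) : ℂ) * (Real.sqrt (w i) : ℂ) := by ring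
      rw [this, inv_mul_cancel₀ (hφ0 _), one_mul, hss, hss]
      push_cast
      ring
    · by_cases hj : j = i + 1
      · subst hj
        have e1 : cycleInc n φ w (i+1) (i - 1) = 0 := by
          have c2 : i + 1 ≠ (i - 1) + 1 := by
            rw [← hi1]
            exact fun hEq => h1 (by rwa [add_eq_left] at hEq)
          simp only [cycleInc]
          rw [if_neg (htwo i), if_neg c2]
        have e2 : cycleInc n φ w (i+1) i = -(φ i)⁻¹ * (Real.sqrt (w i) : ℂ) := by
          simp only [cycleInc]
          rw [if_neg (hselfadd i)]
          simp
        rw [e1, e2, hstarneg]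
        have hL : cycleLap n φ w i (i+1) = -(φ i * (w i : ℂ)) := by
          simp only [cycleLap]
          rw [if_neg hij]
          simp
        rw [hL, star_zero]
        rw [show -(φ (i-1))⁻¹ * (Real.sqrt (w (i-1)) : ℂ) * 0
            + (Real.sqrt (w i) : ℂ) * (-(φ i) * (Real.sqrt (w i) : ℂ))
            = -(φ i * ((Real.sqrt (w i) : ℂ) * (Real.sqrt (w i) : ℂ))) from by ring, hss]
      · by_cases hj' : i = j + 1
        · have hji : j = i - 1 := by rw [hj']; ring
          subst hji
          have e2 : cycleInc n φ w (i-1) (i-1) = (Real.sqrt (w (i-1)) : ℂ) := by simp [cycleInc]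
          have e3 : cycleInc n φ w (i-1) i = 0 := by
            have c2 : i - 1 ≠ i + 1 := fun hEq => htwo i hEq.symm
            simp only [cycleInc]
            rw [if_neg hsub, if_neg c2]
          rw [e2, e3, hstarre, star_zero]
          have hL : cycleLap n φ w i (i-1) = -((φ (i-1))⁻¹ * (w (i-1) : ℂ)) := by
            simp only [cycleLap]
            rw [if_neg hij, if_neg hj, if_pos hj']
          rw [hL]
          rw [show -(φ (i-1))⁻¹ * (Real.sqrt (w (i-1)) : ℂ) * (Real.sqrt (w (i-1)) : ℂ)
              + (Real.sqrt (w i) : ℂ) * 0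
              = -((φ (i-1))⁻¹ * ((Real.sqrt (w (i-1)) : ℂ) * (Real.sqrt (w (i-1)) : ℂ))) from by ring,
            hss]
        · have e1 : cycleInc n φ w j (i-1) = 0 := by
            have c1 : j ≠ i - 1 := by
              intro hEq
              exact hj' (by rw [hEq]; ring)
            have c2 : j ≠ (i-1) + 1 := by
              rw [← hi1]
              exact fun h => hij h.symm
            simp only [cycleInc]
            rw [if_neg c1, if_neg c2]
          have e2 : cycleInc n φ w j i = 0 := by
            simp only [cycleInc]
            rw [if_neg (fun h => hij h.symm), if_neg hj]
          rw [e1, e2]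
          have hL : cycleLap n φ w i j = 0 := by
            simp only [cycleLap]
            rw [if_neg hij, if_neg hj, if_neg hj']
          rw [hL]
          simp
  · intro e he
    obtain ⟨he1, he2⟩ := he
    have c1 : i ≠ e := fun h => he2 h.symm
    have c2 : i ≠ e + 1 := by
      intro h
      apply he1
      rw [h]
      ring
    have : cycleInc n φ w i e = 0 := by
      simp only [cycleInc]
      rw [if_neg c1, if_neg c2]
    rw [this, zero_mul]

lemma det_cycleInc {n : ℕ} [NeZero n] (hn : 3 ≤ n) (φ : Fin n → ℂ) (w : Fin n → ℝ) :
    (cycleInc n φ w).det =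
      (∏ i, (Real.sqrt (w i) : ℂ)) * (1 - ∏ i, (φ i)⁻¹) := by
  have h1 : (1 : Fin n) ≠ 0 := by
    simp [Fin.ext_iff, Fin.val_one', Nat.mod_eq_of_lt (by omega : 1 < n)]
  obtain ⟨m, rfl⟩ : ∃ m, n = m + 1 := ⟨n - 1, by omega⟩
  have hc : (Equiv.addRight (1 : Fin (m+1))) = finRotate (m + 1) := by
    refine Equiv.ext fun x => ?_
    simp [finRotate_succ_apply]
  have hne : (1 : Equiv.Perm (Fin (m+1))) ≠ Equiv.addRight 1 := by
    intro hEq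
    have h0 : (0 : Fin (m+1)) = 0 + 1 := Equiv.ext_iff.1 hEq 0
    rw [zero_add] at h0
    exact h1 h0.symm
  rw [Matrix.det_apply]
  rw [Fintype.sum_eq_add (1 : Equiv.Perm (Fin (m+1))) (Equiv.addRight 1) hne ?_]
  · -- compute the two terms
    have hid : ∀ e : Fin (m+1), cycleInc (m+1) φ w e e = (Real.sqrt (w e) : ℂ) := by
      intro e; simp [cycleInc]
    have hsh : ∀ e : Fin (m+1), cycleInc (m+1) φ w (e + 1) e
        = -(φ e)⁻¹ * (Real.sqrt (w e) : ℂ) := by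
      intro e
      have : e + 1 ≠ e := by
        intro hEq; exact h1 (by rwa [add_eq_left] at hEq)
      simp [cycleInc, this]
    rw [Equiv.Perm.sign_one]
    have hsign : Equiv.Perm.sign (Equiv.addRight (1 : Fin (m+1))) = (-1 : ℤˣ) ^ m := by
      rw [hc, sign_finRotate, Nat.add_sub_cancel]
    rw [hsign]
    simp only [Equiv.Perm.one_apply, Equiv.coe_addRight]
    rw [Finset.prod_congr rfl (fun e _ => hid e),
        Finset.prod_congr rfl (fun e _ => hsh e)]
    rw [Finset.prod_mul_distrib]
    have h2 : ∏ e : Fin (m+1), (-(φ e)⁻¹) = (-1 : ℂ) ^ (m+1) * ∏ e, (φ e)⁻¹ := by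
      rw [show ((-1:ℂ))^(m+1) = ∏ _e : Fin (m+1), (-1:ℂ) by simp]
      rw [← Finset.prod_mul_distrib]
      simp
    rw [h2]
    simp only [Units.smul_def, one_smul, Units.val_pow_eq_pow_val, Units.val_neg, Units.val_one,
      zsmul_eq_mul, Int.cast_pow, Int.cast_neg, Int.cast_one]
    have h3 : ((-1 : ℂ)) ^ m * ((-1 : ℂ) ^ (m+1)) = -1 := by
      rw [← pow_add]
      have : Odd (m + (m + 1)) := ⟨m, by ring⟩
      exact this.neg_one_pow
    calc (∏ e : Fin (m+1), (Real.sqrt (w e) : ℂ))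
          + (-1:ℂ)^m * ((-1:ℂ)^(m+1) * (∏ e, (φ e)⁻¹) * ∏ e, (Real.sqrt (w e) : ℂ))
        = (∏ e : Fin (m+1), (Real.sqrt (w e) : ℂ))
          + ((-1:ℂ)^m * ((-1:ℂ)^(m+1))) * ((∏ e, (φ e)⁻¹) * ∏ e, (Real.sqrt (w e) : ℂ)) := by
          ring
      _ = _ := by rw [h3]; ring
  · -- all other permutations contribute zero
    intro σ hσ
    obtain ⟨hσ1, hσc⟩ := hσ
    have : ∃ e, cycleInc (m+1) φ w (σ e) e = 0 := by
      by_contra hall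
      push_neg at hall
      have hcond : ∀ e, σ e = e ∨ σ e = e + 1 := by
        intro e
        by_contra hne'
        push_neg at hne'
        have : cycleInc (m+1) φ w (σ e) e = 0 := by
          simp [cycleInc, hne'.1, hne'.2]
        exact hall e this
      rcases perm_classify (by omega) σ hcond with h | h
      · exact hσ1 h
      · exact hσc h
    obtain ⟨e, he⟩ := this
    have hz : ∏ i : Fin (m+1), cycleInc (m+1) φ w (σ i) i = 0 :=
      Finset.prod_eq_zero (Finset.mem_univ e) he
    rw [hz, smul_zero]

/-- The determinant of the Laplacian of a weighted complex unit gain cycle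
`C_n` equals `(∏ w(e_i)) · 2·(1 - Re(φ(C_n)))`. -/
theorem det_cycleLap {n : ℕ} [NeZero n] (hn : 3 ≤ n) (φ : Fin n → ℂ) (w : Fin n → ℝ)
    (hφ : ∀ i, ‖φ i‖ = 1) (hw : ∀ i, 0 < w i) :
    (cycleLap n φ w).det =
      (∏ i, (w i : ℂ)) * (2 * (1 - ((∏ i, φ i).re : ℂ))) := by
  have hg : ‖∏ i, φ i‖ = 1 := by
    rw [norm_prod]
    simp [hφ]
  have hgne : (∏ i, φ i) ≠ 0 := by
    intro h
    rw [h] at hg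
    simp at hg
  have hss : ∀ i, (Real.sqrt (w i) : ℂ) * (Real.sqrt (w i) : ℂ) = (w i : ℂ) := by
    intro i
    rw [← Complex.ofReal_mul, Real.mul_self_sqrt (hw i).le]
  rw [cycleLap_eq_inc_mul hn φ w hφ hw, Matrix.det_mul, Matrix.det_conjTranspose,
    det_cycleInc hn φ w]
  set S : ℂ := ∏ i, (Real.sqrt (w i) : ℂ) with hSdef
  set g : ℂ := ∏ i, φ i with hgdef
  have hP : (∏ i, (φ i)⁻¹) = g⁻¹ := by
    rw [hgdef, ← Finset.prod_inv_distrib]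
  have hstarS : star S = S := by
    rw [hSdef, ← Complex.ofReal_prod,
      show (star ((∏ i, Real.sqrt (w i) : ℝ) : ℂ)) = (starRingEnd ℂ) _ from rfl,
      Complex.conj_ofReal]
  have hconjg : (starRingEnd ℂ) g⁻¹ = g := by
    rw [map_inv₀, ← Complex.inv_eq_conj hg, inv_inv]
  have hstar : star (S * (1 - ∏ i, (φ i)⁻¹)) = S * (1 - g) := by
    rw [hP, star_mul', hstarS, star_sub, star_one,
      show (star (g⁻¹ : ℂ)) = (starRingEnd ℂ) g⁻¹ from rfl, hconjg]
  rw [hstar, hP]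
  have hSS : S * S = ∏ i, (w i : ℂ) := by
    rw [hSdef, ← Finset.prod_mul_distrib]
    exact Finset.prod_congr rfl fun i _ => hss i
  have hexp : (1 - g⁻¹) * (1 - g) = 2 * (1 - ((g.re : ℝ) : ℂ)) := by
    have h1 : (1 - g⁻¹) * (1 - g) = 2 - (g + g⁻¹) := by
      have : g⁻¹ * g = 1 := inv_mul_cancel₀ hgne
      field_simp
      ring
    rw [h1, Complex.inv_eq_conj hg, Complex.add_conj]
    push_cast
    ring
  calc S * (1 - g⁻¹) * (S * (1 - g)) = (S * S) * ((1 - g⁻¹) * (1 - g)) := by ring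
    _ = (∏ i, (w i : ℂ)) * (2 * (1 - ((g.re : ℝ) : ℂ))) := by rw [hSS, hexp]
end

section
/- Let (Θ,w) be a connected unbalanced weighted complex unit gain graph on n vertices. Then its weighted incidence matrix H(Θ,w) has rank n, i.e., rank(H(Θ,w)) = n = |V(Θ)|. -/
open Matrix Complex BigOperators

def walkGain {n : ℕ} {G : SimpleGraph (Fin n)} (φ : Fin n → Fin n → ℂ) :
    {u v : Fin n} → G.Walk u v → ℂ
  | _, _, SimpleGraph.Walk.nil => 1
  | u, _, SimpleGraph.Walk.cons (v := x) _ p => φ u x * walkGain φ p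

open Classical in
noncomputable def gAdj {n : ℕ} (G : SimpleGraph (Fin n)) (φ : Fin n → Fin n → ℂ)
    (w : Fin n → Fin n → ℝ) : Matrix (Fin n) (Fin n) ℂ := fun i j =>
  if G.Adj i j then φ i j * (w i j : ℂ) else 0

open Classical in
noncomputable def gLap {n : ℕ} (G : SimpleGraph (Fin n)) (φ : Fin n → Fin n → ℂ)
    (w : Fin n → Fin n → ℝ) : Matrix (Fin n) (Fin n) ℂ :=
  Matrix.diagonal (fun i => ∑ j, if G.Adj i j then (w i j : ℂ) else 0) - gAdj G φ w

abbrev Edges {n : ℕ} (G : SimpleGraph (Fin n)) := {p : Fin n × Fin n // p.1 < p.2 ∧ G.Adj p.1 p.2}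

noncomputable def gInc {n : ℕ} (G : SimpleGraph (Fin n)) (φ : Fin n → Fin n → ℂ)
    (w : Fin n → Fin n → ℝ) : Matrix (Fin n) (Edges G) ℂ := fun v e =>
  if v = e.1.1 then (Real.sqrt (w e.1.1 e.1.2) : ℂ)
  else if v = e.1.2 then -(φ e.1.1 e.1.2)⁻¹ * (Real.sqrt (w e.1.1 e.1.2) : ℂ)
  else 0

def IsBalanced {n : ℕ} (G : SimpleGraph (Fin n)) (φ : Fin n → Fin n → ℂ) : Prop :=
  ∀ (u : Fin n) (c : G.Walk u u), c.IsCycle → walkGain φ c = 1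

open Classical in
/-- The weighted incidence matrix of a connected unbalanced weighted complex
unit gain graph on n vertices has rank n. -/
theorem rank_incidence_of_unbalanced {n : ℕ}
    (G : SimpleGraph (Fin n)) (φ : Fin n → Fin n → ℂ) (w : Fin n → Fin n → ℝ)
    (hconn : G.Connected)
    (hφ1 : ∀ i j, G.Adj i j → ‖φ i j‖ = 1)
    (hφ2 : ∀ i j, G.Adj i j → φ j i = (φ i j)⁻¹)
    (hw : ∀ i j, G.Adj i j → 0 < w i j)
    (hws : ∀ i j, w i j = w j i)
    (hunbal : ¬ IsBalanced G φ) :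
    (gInc G φ w).rank = n := by

  classical
  rw [← Matrix.rank_transpose]
  have hinj : Function.Injective (gInc G φ w)ᵀ.mulVecLin := by
    rw [← LinearMap.ker_eq_bot, LinearMap.ker_eq_bot']
    intro x hx0
    -- edge equations
    have hedge : ∀ e : Edges G,
        (Real.sqrt (w e.1.1 e.1.2) : ℂ) * x e.1.1
          + (-(φ e.1.1 e.1.2)⁻¹ * (Real.sqrt (w e.1.1 e.1.2) : ℂ)) * x e.1.2 = 0 := by
      intro e
      have h := congrFun hx0 e
      have hne : e.1.2 ≠ e.1.1 := (ne_of_lt e.2.1).symm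
      simp only [Matrix.mulVecLin_apply, Matrix.mulVec, Matrix.transpose_apply,
        dotProduct, gInc] at h
      rw [show (fun v => (if v = e.1.1 then (Real.sqrt (w e.1.1 e.1.2) : ℂ)
          else if v = e.1.2 then -(φ e.1.1 e.1.2)⁻¹ * (Real.sqrt (w e.1.1 e.1.2) : ℂ)
          else 0) * x v)
        = (fun v => (if v = e.1.1 then (Real.sqrt (w e.1.1 e.1.2) : ℂ) * x e.1.1 else 0)
          + (if v = e.1.2 then (-(φ e.1.1 e.1.2)⁻¹ * (Real.sqrt (w e.1.1 e.1.2) : ℂ)) * x e.1.2 else 0))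
        from ?_] at h
      · rw [Finset.sum_add_distrib, Finset.sum_ite_eq' Finset.univ,
          Finset.sum_ite_eq' Finset.univ] at h
        simpa using h
      · funext v
        by_cases h1 : v = e.1.1
        · subst h1; simp [hne.symm]
        · by_cases h2 : v = e.1.2
          · subst h2; simp [h1]
          · simp [h1, h2]
    have hφne : ∀ i j, G.Adj i j → φ i j ≠ 0 := by
      intro i j hij h0
      have := hφ1 i j hij
      rw [h0] at this; simp at this
    -- propagation along an edge
    have hx : ∀ i j, G.Adj i j → x j = φ i j * x i := by
      intro i j hij
      rcases lt_or_gt_of_ne hij.ne with hlt | hlt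
      · have h := hedge ⟨(i, j), hlt, hij⟩
        simp only at h
        have hsq : (Real.sqrt (w i j) : ℂ) ≠ 0 := by
          exact_mod_cast (Real.sqrt_pos.mpr (hw i j hij)).ne'
        have h2 : (Real.sqrt (w i j) : ℂ) * (x i - (φ i j)⁻¹ * x j) = 0 := by
          linear_combination h
        have h3 : x i - (φ i j)⁻¹ * x j = 0 := by
          rcases mul_eq_zero.mp h2 with h' | h'
          · exact absurd h' hsq
          · exact h'
        have h4 : x i = (φ i j)⁻¹ * x j := sub_eq_zero.mp h3
        have := hφne i j hij
        field_simp at h4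
        linear_combination -h4
      · have hji : G.Adj j i := hij.symm
        have h := hedge ⟨(j, i), hlt, hji⟩
        simp only at h
        have hsq : (Real.sqrt (w j i) : ℂ) ≠ 0 := by
          exact_mod_cast (Real.sqrt_pos.mpr (hw j i hji)).ne'
        have h2 : (Real.sqrt (w j i) : ℂ) * (x j - (φ j i)⁻¹ * x i) = 0 := by
          linear_combination h
        have h3 : x j - (φ j i)⁻¹ * x i = 0 := by
          rcases mul_eq_zero.mp h2 with h' | h'
          · exact absurd h' hsq
          · exact h'
        have h4 : x j = (φ j i)⁻¹ * x i := sub_eq_zero.mp h3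
        rw [hφ2 i j hij, inv_inv] at h4
        exact h4
    -- propagation along walks
    have hwalk : ∀ (u v : Fin n) (p : G.Walk u v), x v = walkGain φ p * x u := by
      intro u v p
      induction p with
      | nil => simp [walkGain]
      | @cons a b c h p ih =>
        rw [show walkGain φ (SimpleGraph.Walk.cons h p) = φ a b * walkGain φ p from rfl]
        rw [ih, hx a b h]
        ring
    -- unbalanced: some cycle with gain ≠ 1
    rw [IsBalanced] at hunbal
    push_neg at hunbal
    obtain ⟨u, c, hc, hg⟩ := hunbal
    have hu : x u = 0 := by
      have h := hwalk u u c
      have h2 : (walkGain φ c - 1) * x u = 0 := by linear_combination -h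
      rcases mul_eq_zero.mp h2 with h' | h'
      · exact absurd (by linear_combination h' : walkGain φ c = 1) hg
      · exact h'
    funext v
    obtain ⟨p⟩ := hconn.preconnected u v
    rw [show x v = walkGain φ p * x u from hwalk u v p, hu, mul_zero]
    rfl
  rw [Matrix.rank]
  rw [LinearMap.finrank_range_of_inj hinj]
  exact Module.finrank_fin_fun ℂ
end

section
/- Let (Θ,w) be a connected weighted complex unit gain graph. Then (Θ,w) is balanced if and only if det(L(Θ,w)) = 0. -/
open Matrix Complex BigOperators

section Aux
variable {n : ℕ} {G : SimpleGraph (Fin n)} {φ : Fin n → Fin n → ℂ}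

lemma walkGain_nil {u : Fin n} : walkGain φ (SimpleGraph.Walk.nil : G.Walk u u) = 1 := rfl

lemma walkGain_cons {u x v : Fin n} (h : G.Adj u x) (p : G.Walk x v) :
    walkGain φ (SimpleGraph.Walk.cons h p) = φ u x * walkGain φ p := rfl

lemma walkGain_append : ∀ {u v t : Fin n} (p : G.Walk u v) (q : G.Walk v t),
    walkGain φ (p.append q) = walkGain φ p * walkGain φ q
  | _, _, _, SimpleGraph.Walk.nil, q => by simp [walkGain_nil]
  | _, _, _, SimpleGraph.Walk.cons h p, q => by
      rw [SimpleGraph.Walk.cons_append, walkGain_cons, walkGain_cons,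
        walkGain_append p q, mul_assoc]

lemma walkGain_ne_zero (hφ1 : ∀ i j, G.Adj i j → ‖φ i j‖ = 1) :
    ∀ {u v : Fin n} (p : G.Walk u v), walkGain φ p ≠ 0
  | _, _, SimpleGraph.Walk.nil => one_ne_zero
  | _, _, SimpleGraph.Walk.cons h p => by
      rw [walkGain_cons]
      refine mul_ne_zero (fun h0 => ?_) (walkGain_ne_zero hφ1 p)
      have := hφ1 _ _ h
      rw [h0] at this; simp at this

lemma walkGain_reverse (hφ1 : ∀ i j, G.Adj i j → ‖φ i j‖ = 1)
    (hφ2 : ∀ i j, G.Adj i j → φ j i = (φ i j)⁻¹) :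
    ∀ {u v : Fin n} (p : G.Walk u v), walkGain φ p.reverse = (walkGain φ p)⁻¹
  | _, _, SimpleGraph.Walk.nil => by simp [walkGain_nil]
  | _, _, SimpleGraph.Walk.cons h p => by
      rw [SimpleGraph.Walk.reverse_cons, walkGain_append, walkGain_reverse hφ1 hφ2 p,
        walkGain_cons, walkGain_nil, walkGain_cons, mul_inv, hφ2 _ _ h]
      ring

lemma edge_not_mem_path_edges {u v : Fin n} (p : G.Walk v u) (hp : p.IsPath)
    (hlen : 2 ≤ p.length) : s(u, v) ∉ p.edges := by
  intro hmem
  cases p with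
  | nil => simp at hlen
  | cons h' q =>
    rename_i x
    rw [SimpleGraph.Walk.edges_cons, List.mem_cons] at hmem
    rw [SimpleGraph.Walk.cons_isPath_iff] at hp
    rcases hmem with heq | hmem
    · rw [Sym2.eq_iff] at heq
      rcases heq with ⟨hu, hv⟩ | ⟨hu, hv⟩
      · exact G.irrefl (hv ▸ h')
      · subst hu
        have : q = SimpleGraph.Walk.nil := SimpleGraph.Walk.isPath_iff_eq_nil.mp hp.1
        subst this
        simp at hlen
    · have : v ∈ q.support := SimpleGraph.Walk.snd_mem_support_of_mem_edges q hmem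
      exact hp.2 this

lemma walkGain_closed (hφ1 : ∀ i j, G.Adj i j → ‖φ i j‖ = 1)
    (hφ2 : ∀ i j, G.Adj i j → φ j i = (φ i j)⁻¹) (hbal : IsBalanced G φ) :
    ∀ (N : ℕ) {u : Fin n} (c : G.Walk u u), c.length ≤ N → walkGain φ c = 1 := by
  intro N
  induction N with
  | zero =>
    intro u c hc
    cases c with
    | nil => rfl
    | cons h p => simp [SimpleGraph.Walk.length_cons] at hc
  | succ N ih =>
    intro u c hc
    by_cases hnd : c.support.tail.Nodup
    · cases c with
      | nil => rfl
      | cons h p =>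
        rename_i v
        have hnd' : p.support.Nodup := by
          simpa [SimpleGraph.Walk.support_cons] using hnd
        have hp : p.IsPath := (SimpleGraph.Walk.isPath_def p).mpr hnd'
        match p, h, hp with
        | SimpleGraph.Walk.nil, h, _ => exact absurd h (G.irrefl)
        | SimpleGraph.Walk.cons h' SimpleGraph.Walk.nil, h, _ =>
          rw [walkGain_cons, walkGain_cons, walkGain_nil, hφ2 _ _ h, mul_one]
          have : φ u v ≠ 0 := by
            intro h0; have := hφ1 _ _ h; rw [h0] at this; simp at this
          field_simp
        | SimpleGraph.Walk.cons h' (SimpleGraph.Walk.cons h'' r), h, hp =>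
          refine hbal u _ ((SimpleGraph.Walk.cons_isCycle_iff _ h).mpr ⟨hp, ?_⟩)
          exact edge_not_mem_path_edges _ hp (by simp [SimpleGraph.Walk.length_cons])
    · cases c with
      | nil => simp at hnd
      | cons h p =>
        rename_i v
        rw [SimpleGraph.Walk.support_cons, List.tail_cons] at hnd
        obtain ⟨x, hxdup⟩ := List.exists_duplicate_iff_not_nodup.mpr hnd
        have hcount : 2 ≤ p.support.count x := List.duplicate_iff_two_le_count.mp hxdup
        have hxmem : x ∈ p.support := List.count_pos_iff.mp (by omega)
        set t := p.takeUntil x hxmem with ht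
        set d := p.dropUntil x hxmem with hd
        have hspec : t.append d = p := p.take_spec hxmem
        have hcount_t : t.support.count x = 1 := p.count_support_takeUntil_eq_one hxmem
        have hsupp : p.support = t.support ++ d.support.tail := by
          rw [← hspec, SimpleGraph.Walk.support_append]
        have hxd : x ∈ d.support.tail := by
          have hcnt : p.support.count x = t.support.count x + d.support.tail.count x := by
            rw [hsupp, List.count_append]
          have : 1 ≤ d.support.tail.count x := by omega
          exact List.count_pos_iff.mp (by omega)
        match d, hxd, hspec with
        | SimpleGraph.Walk.cons (v := y) hd' q, hxd, hspec =>
          rw [SimpleGraph.Walk.support_cons, List.tail_cons] at hxd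
          set q1 := q.takeUntil x hxd with hq1
          set q2 := q.dropUntil x hxd with hq2
          have hqspec : q1.append q2 = q := q.take_spec hxd
          have hlen : t.length + q1.length + q2.length + 2 = (SimpleGraph.Walk.cons h p).length := by
            rw [SimpleGraph.Walk.length_cons, ← hspec, SimpleGraph.Walk.length_append,
              SimpleGraph.Walk.length_cons, ← hqspec, SimpleGraph.Walk.length_append]
            omega
          have g1 : walkGain φ (SimpleGraph.Walk.cons h (t.append q2)) = 1 := by
            apply ih
            rw [SimpleGraph.Walk.length_cons, SimpleGraph.Walk.length_append]
            omega
          have g2 : walkGain φ (SimpleGraph.Walk.cons hd' q1) = 1 := by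
            apply ih
            rw [SimpleGraph.Walk.length_cons]
            omega
          have e1 : φ u v * (walkGain φ t * walkGain φ q2) = 1 := by
            rw [← walkGain_append, ← walkGain_cons h]; exact g1
          have e2 : φ x y * walkGain φ q1 = 1 := by
            rw [← walkGain_cons hd']; exact g2
          calc walkGain φ (SimpleGraph.Walk.cons h p)
              = φ u v * walkGain φ p := rfl
            _ = φ u v * (walkGain φ t * (φ x y * (walkGain φ q1 * walkGain φ q2))) := by
                rw [← hspec, ← hqspec, walkGain_append, walkGain_cons, walkGain_append]
            _ = (φ u v * (walkGain φ t * walkGain φ q2)) * (φ x y * walkGain φ q1) := by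
                ring
            _ = 1 := by rw [e1, e2, one_mul]

end Aux

open Classical in
lemma lap_mulVec {n : ℕ} (G : SimpleGraph (Fin n)) (φ : Fin n → Fin n → ℂ)
    (w : Fin n → Fin n → ℝ) (x : Fin n → ℂ) (i : Fin n) :
    (gLap G φ w *ᵥ x) i = ∑ j, (if G.Adj i j then (w i j : ℂ) * (x i - φ i j * x j) else 0) := by
  rw [gLap, Matrix.sub_mulVec, Pi.sub_apply, Matrix.mulVec_diagonal]
  have : (gAdj G φ w *ᵥ x) i = ∑ j, (if G.Adj i j then φ i j * (w i j : ℂ) else 0) * x j := by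
    simp [Matrix.mulVec, dotProduct, gAdj]
  rw [this, Finset.sum_mul, ← Finset.sum_sub_distrib]
  apply Finset.sum_congr rfl
  intro j _
  by_cases hij : G.Adj i j <;> simp [hij] <;> ring

open Classical in
lemma kernel_edge_rel {n : ℕ} (G : SimpleGraph (Fin n)) (φ : Fin n → Fin n → ℂ)
    (w : Fin n → Fin n → ℝ)
    (hφ1 : ∀ i j, G.Adj i j → ‖φ i j‖ = 1)
    (hφ2 : ∀ i j, G.Adj i j → φ j i = (φ i j)⁻¹)
    (hw : ∀ i j, G.Adj i j → 0 < w i j)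
    (hws : ∀ i j, w i j = w j i)
    (x : Fin n → ℂ) (hLx : gLap G φ w *ᵥ x = 0) :
    ∀ i j, G.Adj i j → x i = φ i j * x j := by
  have hφ0 : ∀ i j, G.Adj i j → φ i j ≠ 0 := by
    intro i j hij h0
    have := hφ1 i j hij; rw [h0] at this; simp at this
  have hφc : ∀ i j, G.Adj i j → (starRingEnd ℂ) (φ i j) = (φ i j)⁻¹ := by
    intro i j hij
    have h1 : Complex.normSq (φ i j) = 1 := by
      rw [Complex.normSq_eq_norm_sq, hφ1 i j hij]; norm_num
    rw [Complex.inv_def, h1]; simp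
  have hsum0 : ∀ i, ∑ j, (if G.Adj i j then (w i j : ℂ) * (x i - φ i j * x j) else 0) = 0 := by
    intro i; rw [← lap_mulVec, hLx]; rfl
  set F : Fin n → Fin n → ℂ :=
    fun i j => if G.Adj i j then (w i j : ℂ) * (x i - φ i j * x j) * (starRingEnd ℂ) (x i)
      else 0 with hF
  set Gt : Fin n → Fin n → ℂ :=
    fun i j => if G.Adj i j then
      -((w i j : ℂ) * (x i - φ i j * x j) * ((starRingEnd ℂ) (φ i j) * (starRingEnd ℂ) (x j)))
      else 0 with hGt
  have hFsum : ∑ i, ∑ j, F i j = 0 := by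
    apply Finset.sum_eq_zero; intro i _
    have h2 : ∑ j, F i j
        = (∑ j, (if G.Adj i j then (w i j : ℂ) * (x i - φ i j * x j) else 0))
          * (starRingEnd ℂ) (x i) := by
      rw [Finset.sum_mul]
      apply Finset.sum_congr rfl
      intro j _
      by_cases hij : G.Adj i j <;> simp [hF, hij]
    rw [h2, hsum0 i, zero_mul]
  have hswap : ∀ a b, Gt a b = F b a := by
    intro a b
    by_cases hab : G.Adj a b
    · have hba : G.Adj b a := hab.symm
      simp only [hF, hGt, if_pos hab, if_pos hba]
      rw [hws a b, hφ2 b a hba, map_inv₀, hφc b a hba, inv_inv]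
      have h0 := hφ0 b a hba
      field_simp
      ring
    · have hba : ¬ G.Adj b a := fun h => hab h.symm
      simp [hF, hGt, hab, hba]
  have hGsum : ∑ i, ∑ j, Gt i j = 0 := by
    calc ∑ i, ∑ j, Gt i j = ∑ i, ∑ j, F j i := by
          apply Finset.sum_congr rfl; intro i _
          apply Finset.sum_congr rfl; intro j _
          exact hswap i j
      _ = ∑ j, ∑ i, F j i := Finset.sum_comm
      _ = 0 := hFsum
  set S : ℝ := ∑ i, ∑ j,
      (if G.Adj i j then w i j * Complex.normSq (x i - φ i j * x j) else 0) with hS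
  have hSC : (S : ℂ) = ∑ i, ∑ j, (F i j + Gt i j) := by
    rw [hS]
    push_cast
    apply Finset.sum_congr rfl; intro i _
    apply Finset.sum_congr rfl; intro j _
    by_cases hij : G.Adj i j
    · simp only [hF, hGt, if_pos hij, apply_ite (Complex.ofReal), Complex.ofReal_zero]
      rw [Complex.ofReal_mul, ← Complex.mul_conj, map_sub, _root_.map_mul]
      ring
    · simp [hF, hGt, hij]
  have hS0 : S = 0 := by
    have h3 : ∑ i, ∑ j, (F i j + Gt i j) = (∑ i, ∑ j, F i j) + ∑ i, ∑ j, Gt i j := by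
      rw [← Finset.sum_add_distrib]
      apply Finset.sum_congr rfl; intro i _
      rw [Finset.sum_add_distrib]
    have h4 : (S : ℂ) = 0 := by rw [hSC, h3, hFsum, hGsum, add_zero]
    exact_mod_cast h4
  have hnn : ∀ i ∈ Finset.univ, ∀ j ∈ (Finset.univ : Finset (Fin n)),
      0 ≤ (if G.Adj i j then w i j * Complex.normSq (x i - φ i j * x j) else 0) := by
    intro i _ j _
    by_cases hij : G.Adj i j
    · simp only [if_pos hij]
      exact mul_nonneg (le_of_lt (hw i j hij)) (Complex.normSq_nonneg _)
    · simp [hij]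
  intro i j hij
  have houter := (Finset.sum_eq_zero_iff_of_nonneg
    (fun i _ => Finset.sum_nonneg (hnn i (Finset.mem_univ i)))).mp hS0
  have hinner := (Finset.sum_eq_zero_iff_of_nonneg (hnn i (Finset.mem_univ i))).mp
    (houter i (Finset.mem_univ i)) j (Finset.mem_univ j)
  rw [if_pos hij] at hinner
  have h1 : Complex.normSq (x i - φ i j * x j) = 0 := by
    rcases mul_eq_zero.mp hinner with h | h
    · exact absurd h (hw i j hij).ne'
    · exact h
  exact sub_eq_zero.mp (Complex.normSq_eq_zero.mp h1)


/-- A connected weighted complex unit gain graph is balanced if and only if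
the determinant of its Laplacian is zero. -/

theorem balanced_iff_det_laplacian_eq_zero {n : ℕ}
    (G : SimpleGraph (Fin n)) (φ : Fin n → Fin n → ℂ) (w : Fin n → Fin n → ℝ)
    (hconn : G.Connected)
    (hφ1 : ∀ i j, G.Adj i j → ‖φ i j‖ = 1)
    (hφ2 : ∀ i j, G.Adj i j → φ j i = (φ i j)⁻¹)
    (hw : ∀ i j, G.Adj i j → 0 < w i j)
    (hws : ∀ i j, w i j = w j i) :
    IsBalanced G φ ↔ (gLap G φ w).det = 0 := by
  classical
  constructor
  · intro hbal
    obtain ⟨r⟩ := hconn.nonempty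
    set x : Fin n → ℂ := fun v => walkGain φ ((hconn.preconnected v r).some) with hxdef
    have key : ∀ i j, G.Adj i j → x i = φ i j * x j := by
      intro i j hij
      have h1 : walkGain φ ((SimpleGraph.Walk.cons hij ((hconn.preconnected j r).some)).append
          ((hconn.preconnected i r).some).reverse) = 1 :=
        walkGain_closed hφ1 hφ2 hbal _ _ le_rfl
      rw [walkGain_append, walkGain_cons, walkGain_reverse hφ1 hφ2] at h1
      have hpi := walkGain_ne_zero hφ1 ((hconn.preconnected i r).some)
      have h2 : φ i j * walkGain φ ((hconn.preconnected j r).some)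
          = walkGain φ ((hconn.preconnected i r).some) := by
        field_simp at h1
        exact h1
      simpa [hxdef] using h2.symm
    have hx : x ≠ 0 := fun h0 =>
      walkGain_ne_zero hφ1 ((hconn.preconnected r r).some) (congrFun h0 r)
    have hLx : gLap G φ w *ᵥ x = 0 := by
      funext i
      rw [lap_mulVec, Pi.zero_apply]
      apply Finset.sum_eq_zero; intro j _
      by_cases hij : G.Adj i j
      · rw [if_pos hij, key i j hij, sub_self, mul_zero]
      · rw [if_neg hij]
    exact Matrix.exists_mulVec_eq_zero_iff.mp ⟨x, hx, hLx⟩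
  · intro hdet
    obtain ⟨x, hx, hLx⟩ := Matrix.exists_mulVec_eq_zero_iff.mpr hdet
    have key := kernel_edge_rel G φ w hφ1 hφ2 hw hws x hLx
    have hprop : ∀ {a b : Fin n} (p : G.Walk a b), x a = walkGain φ p * x b := by
      intro a b p
      induction p with
      | nil => rw [walkGain_nil, one_mul]
      | cons h q ih => rw [walkGain_cons, key _ _ h, ih, mul_assoc]
    obtain ⟨v0, hv0⟩ := Function.ne_iff.mp hx
    intro u c _hc
    have hxu : x u ≠ 0 := by
      rw [hprop ((hconn.preconnected u v0).some)]
      exact mul_ne_zero (walkGain_ne_zero hφ1 _) hv0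
    have h5 : walkGain φ c * x u = 1 * x u := by rw [one_mul, ← hprop c]
    exact mul_right_cancel₀ hxu h5
end

section
/- For a connected complex unit gain graph Θ = (Σ,φ) with a vertex ordering <, the maximum gain distance Laplacian satisfies DL^max_< (Θ) = DH^max_< (Θ) · (DH^max_< (Θ))^T, where DH^max_< (Θ) is the maximum distance incidence matrix. -/
open Matrix Complex BigOperators

/-- The lexicographically maximal gain (first maximizing the real part, then the
imaginary part) among the gains of all shortest paths from `u` to `v`. -/
noncomputable def phiMaxAux {n : ℕ} (G : SimpleGraph (Fin n)) (φ : Fin n → Fin n → ℂ)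
    (u v : Fin n) : ℂ :=
  let S : Set ℂ := {z | ∃ p : G.Walk u v, p.length = G.dist u v ∧ z = walkGain φ p}
  { re := sSup (Complex.re '' S),
    im := sSup (Complex.im '' {z ∈ S | z.re = sSup (Complex.re '' S)}) }

/-- The lexicographically minimal gain among the gains of all shortest paths. -/
noncomputable def phiMinAux {n : ℕ} (G : SimpleGraph (Fin n)) (φ : Fin n → Fin n → ℂ)
    (u v : Fin n) : ℂ :=
  let S : Set ℂ := {z | ∃ p : G.Walk u v, p.length = G.dist u v ∧ z = walkGain φ p}
  { re := sInf (Complex.re '' S),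
    im := sInf (Complex.im '' {z ∈ S | z.re = sInf (Complex.re '' S)}) }

/-- Maximum auxiliary gain `φ^max_<` for the standard ordering of `Fin n`. -/
noncomputable def phiMax {n : ℕ} (G : SimpleGraph (Fin n)) (φ : Fin n → Fin n → ℂ)
    (u v : Fin n) : ℂ :=
  if u = v then 0
  else if u < v then phiMaxAux G φ u v
  else (starRingEnd ℂ) (phiMaxAux G φ v u)

/-- Minimum auxiliary gain `φ^min_<` for the standard ordering of `Fin n`. -/
noncomputable def phiMin {n : ℕ} (G : SimpleGraph (Fin n)) (φ : Fin n → Fin n → ℂ)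
    (u v : Fin n) : ℂ :=
  if u = v then 0
  else if u < v then phiMinAux G φ u v
  else (starRingEnd ℂ) (phiMinAux G φ v u)

/-- The maximum gain distance matrix `D^max_<`. -/
noncomputable def Dmax {n : ℕ} (G : SimpleGraph (Fin n)) (φ : Fin n → Fin n → ℂ) :
    Matrix (Fin n) (Fin n) ℂ :=
  fun s t => phiMax G φ s t * (G.dist s t : ℂ)

/-- The minimum gain distance matrix `D^min_<`. -/
noncomputable def Dmin {n : ℕ} (G : SimpleGraph (Fin n)) (φ : Fin n → Fin n → ℂ) :
    Matrix (Fin n) (Fin n) ℂ :=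
  fun s t => phiMin G φ s t * (G.dist s t : ℂ)

/-- The diagonal transmission matrix `Tr(Σ)`, with `tr(v) = Σ_u d(v,u)`. -/
noncomputable def TrM {n : ℕ} (G : SimpleGraph (Fin n)) : Matrix (Fin n) (Fin n) ℂ :=
  Matrix.diagonal (fun v => ((∑ u, G.dist v u : ℕ) : ℂ))

/-- The maximum gain distance Laplacian `DL^max_< = Tr(Σ) − D^max_<`. -/
noncomputable def DLmax {n : ℕ} (G : SimpleGraph (Fin n)) (φ : Fin n → Fin n → ℂ) :
    Matrix (Fin n) (Fin n) ℂ := TrM G - Dmax G φ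

/-- The minimum gain distance Laplacian `DL^min_< = Tr(Σ) − D^min_<`. -/
noncomputable def DLmin {n : ℕ} (G : SimpleGraph (Fin n)) (φ : Fin n → Fin n → ℂ) :
    Matrix (Fin n) (Fin n) ℂ := TrM G - Dmin G φ

/-- The maximum distance incidence matrix `DH^max_<`: rows indexed by vertices, columns by
pairs `j < k` (oriented from `j` to `k`). -/
noncomputable def DHmax {n : ℕ} (G : SimpleGraph (Fin n)) (φ : Fin n → Fin n → ℂ) :
    Matrix (Fin n) {p : Fin n × Fin n // p.1 < p.2} ℂ := fun v e =>
  if v = e.1.1 then (Real.sqrt (G.dist e.1.1 e.1.2) : ℂ)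
  else if v = e.1.2 then -(phiMax G φ e.1.1 e.1.2)⁻¹ * (Real.sqrt (G.dist e.1.1 e.1.2) : ℂ)
  else 0

/-!
Column `(j,k)`, `j < k`, of `DH^max` is `√d(j,k) (e_j - ψ⁻¹ e_k)` with `ψ = φ^max(j,k)`. Being the
gain of a shortest walk whose edges all have unit gain, `ψ` has modulus one, so this column
contributes `d(j,k) (E_jj + E_kk - ψ E_jk - ψ̄ E_kj)` to `DH^max (DH^max)ᴴ`. Since
`φ^max(k,j) = ψ̄`, the sum of these contributions over all pairs is `Tr - D^max`.
-/

open ComplexConjugate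

theorem Complex.mk_sSup_re_sSup_im_mem {S : Set ℂ} (hfin : S.Finite) (hne : S.Nonempty) :
    (⟨sSup (re '' S), sSup (im '' {z ∈ S | z.re = sSup (re '' S)})⟩ : ℂ) ∈ S := by
  obtain ⟨w, hwS, hwre⟩ := hne.image re |>.csSup_mem (hfin.image re)
  have hT : {z ∈ S | z.re = sSup (re '' S)}.Nonempty := ⟨w, hwS, hwre⟩
  obtain ⟨z, ⟨hzS, hzre⟩, hzim⟩ :=
    (hT.image im).csSup_mem ((hfin.subset fun _ hz => hz.1).image im)
  convert hzS using 1
  exact Complex.ext hzre.symm hzim.symm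

theorem Fintype.sum_subtype_lt {V M : Type*} [Fintype V] [LinearOrder V] [AddCommMonoid M]
    (g : V → V → M) :
    ∑ e : {p : V × V // p.1 < p.2}, g e.1.1 e.1.2 = ∑ j, ∑ k, if j < k then g j k else 0 := by
  rw [← Fintype.sum_prod_type', ← Finset.sum_filter]
  exact (Finset.sum_subtype _ (by simp) (fun p : V × V => g p.1 p.2)).symm

theorem Fintype.sum_subtype_lt_add_swap {V M : Type*} [Fintype V] [LinearOrder V]
    [AddCommMonoid M] (f : V → V → M) (hf : ∀ j, f j j = 0) :
    ∑ e : {p : V × V // p.1 < p.2}, (f e.1.1 e.1.2 + f e.1.2 e.1.1) = ∑ j, ∑ k, f j k := by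
  have hsplit : ∀ j k, f j k = (if j < k then f j k else 0) + (if k < j then f j k else 0) := by
    intro j k
    rcases lt_trichotomy j k with h | rfl | h
    · simp [h, h.not_gt]
    · simp [hf]
    · simp [h, h.not_gt]
  have hswap : ∑ j, ∑ k, (if j < k then f k j else 0) = ∑ j, ∑ k, if k < j then f j k else 0 :=
    Finset.sum_comm
  calc ∑ e : {p : V × V // p.1 < p.2}, (f e.1.1 e.1.2 + f e.1.2 e.1.1)
      = ∑ j, ∑ k, ((if j < k then f j k else 0) + if j < k then f k j else 0) := by
        simp only [Fintype.sum_subtype_lt (fun j k => f j k + f k j), ite_add_zero]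
    _ = ∑ j, ∑ k, ((if j < k then f j k else 0) + if k < j then f j k else 0) := by
        simp only [Finset.sum_add_distrib, hswap]
    _ = ∑ j, ∑ k, f j k := by simp only [← hsplit]

section GainIncidence

variable {V : Type*} [LinearOrder V] (d : V → V → ℝ) (ψ : V → V → ℂ)

noncomputable def gainIncidence : Matrix V {p : V × V // p.1 < p.2} ℂ := fun v e =>
  if v = e.1.1 then (Real.sqrt (d e.1.1 e.1.2) : ℂ)
  else if v = e.1.2 then -(ψ e.1.1 e.1.2)⁻¹ * (Real.sqrt (d e.1.1 e.1.2) : ℂ)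
  else 0

noncomputable def edgeLaplacian (j k : V) : Matrix V V ℂ :=
  single j j (d j k : ℂ) - single j k (ψ j k * d j k)

variable {d ψ}

theorem edgeLaplacian_self {j : V} (hd_self : d j j = 0) :
    edgeLaplacian d ψ j j = 0 := by
  simp [edgeLaplacian, hd_self]

theorem gainIncidence_mul_star_apply (hd_nonneg : ∀ j k, 0 ≤ d j k) (hd_symm : ∀ j k, d k j = d j k)
    (hψ_symm : ∀ j k, ψ k j = conj (ψ j k)) (hψ_norm : ∀ j k, j < k → ‖ψ j k‖ = 1)
    (e : {p : V × V // p.1 < p.2}) (s t : V) :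
    gainIncidence d ψ s e * star (gainIncidence d ψ t e) =
      (edgeLaplacian d ψ e.1.1 e.1.2 + edgeLaplacian d ψ e.1.2 e.1.1) s t := by
  obtain ⟨⟨j, k⟩, hjk⟩ := e
  have hne : j ≠ k := hjk.ne
  have hinv : (ψ j k)⁻¹ = conj (ψ j k) := Complex.inv_eq_conj (hψ_norm j k hjk)
  have hunit : conj (ψ j k) * ψ j k = 1 := by
    rw [← hinv, inv_mul_cancel₀]; exact ne_zero_of_norm_ne_zero (by simp [hψ_norm j k hjk])
  have hsqrt : (d j k : ℂ) = Real.sqrt (d j k) * Real.sqrt (d j k) := by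
    rw [← Complex.ofReal_mul, Real.mul_self_sqrt (hd_nonneg j k)]
  simp only [gainIncidence, edgeLaplacian, Matrix.add_apply, Matrix.sub_apply, single_apply,
    hinv, hψ_symm j k, hd_symm j k, hsqrt, apply_ite star, star_mul', star_neg, Complex.star_def,
    Complex.conj_ofReal, Complex.conj_conj, star_zero]
  -- with `r = √d(j,k)` each entry is a polynomial identity in `r` and `ψ j k`; only the
  -- `(k,k)` entry `ψ̄ ψ r² = r²` uses `|ψ j k| = 1`
  generalize (Real.sqrt (d j k) : ℂ) = r
  clear hψ_symm hd_symm hψ_norm hd_nonneg hinv hsqrt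
  rcases (show s = j ∨ s = k ∨ (s ≠ j ∧ s ≠ k) by tauto) with hs | hs | ⟨hsj, hsk⟩ <;>
  rcases (show t = j ∨ t = k ∨ (t ≠ j ∧ t ≠ k) by tauto) with ht | ht | ⟨htj, htk⟩ <;>
  subst_vars <;> simp only [*, ne_eq, Ne.symm, not_false_eq_true, ↓reduceIte, and_self, and_true,
    and_false] <;> first | linear_combination r * r * hunit | ring

theorem gainIncidence_mul_conjTranspose_eq_sum [Fintype V] (hd_nonneg : ∀ j k, 0 ≤ d j k)
    (hd_symm : ∀ j k, d k j = d j k) (hψ_symm : ∀ j k, ψ k j = conj (ψ j k))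
    (hψ_norm : ∀ j k, j < k → ‖ψ j k‖ = 1) :
    gainIncidence d ψ * (gainIncidence d ψ)ᴴ =
      ∑ e : {p : V × V // p.1 < p.2},
        (edgeLaplacian d ψ e.1.1 e.1.2 + edgeLaplacian d ψ e.1.2 e.1.1) := by
  ext s t
  simp only [mul_apply, conjTranspose_apply, Matrix.sum_apply,
    gainIncidence_mul_star_apply hd_nonneg hd_symm hψ_symm hψ_norm]

theorem sum_sum_edgeLaplacian [Fintype V] :
    ∑ j, ∑ k, edgeLaplacian d ψ j k =
      diagonal (fun j => ∑ k, (d j k : ℂ)) - of fun j k => ψ j k * d j k := by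
  simp only [edgeLaplacian, Finset.sum_sub_distrib, sum_sum_single, ← sum_single_eq_diagonal]
  congr 1
  exact Finset.sum_congr rfl fun j _ => (map_sum (singleAddMonoidHom (α := ℂ) j j) _ _).symm

theorem gainIncidence_mul_conjTranspose [Fintype V] (hd_nonneg : ∀ j k, 0 ≤ d j k)
    (hd_symm : ∀ j k, d k j = d j k) (hd_self : ∀ j, d j j = 0)
    (hψ_symm : ∀ j k, ψ k j = conj (ψ j k)) (hψ_norm : ∀ j k, j < k → ‖ψ j k‖ = 1) :
    gainIncidence d ψ * (gainIncidence d ψ)ᴴ =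
      diagonal (fun j => ∑ k, (d j k : ℂ)) - of fun j k => ψ j k * d j k := by
  rw [gainIncidence_mul_conjTranspose_eq_sum hd_nonneg hd_symm hψ_symm hψ_norm,
    Fintype.sum_subtype_lt_add_swap _ fun j => edgeLaplacian_self (hd_self j),
    sum_sum_edgeLaplacian]

end GainIncidence

theorem norm_walkGain {n : ℕ} {G : SimpleGraph (Fin n)} {φ : Fin n → Fin n → ℂ}
    (hφ : ∀ i j, G.Adj i j → ‖φ i j‖ = 1) {u v : Fin n} (p : G.Walk u v) :
    ‖walkGain φ p‖ = 1 := by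
  induction p with
  | nil => simp [walkGain]
  | cons h p ih => simp [walkGain, hφ _ _ h, ih]

theorem exists_walk_length_eq_dist_phiMaxAux_eq {n : ℕ} {G : SimpleGraph (Fin n)}
    (φ : Fin n → Fin n → ℂ) {u v : Fin n} (huv : G.Reachable u v) :
    ∃ p : G.Walk u v, p.length = G.dist u v ∧ phiMaxAux G φ u v = walkGain φ p := by
  classical
  set S : Set ℂ := {z | ∃ p : G.Walk u v, p.length = G.dist u v ∧ z = walkGain φ p}
  have hfin : S.Finite := by
    refine ((Set.toFinite {p : G.Walk u v | p.length = G.dist u v}).image (walkGain φ)).subset ?_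
    rintro _ ⟨p, hp, rfl⟩
    exact ⟨p, hp, rfl⟩
  have hne : S.Nonempty := by
    obtain ⟨p, hp⟩ := huv.exists_walk_length_eq_dist
    exact ⟨_, p, hp, rfl⟩
  obtain ⟨p, hp, h⟩ := Complex.mk_sSup_re_sSup_im_mem hfin hne
  exact ⟨p, hp, h⟩

theorem norm_phiMax {n : ℕ} {G : SimpleGraph (Fin n)} {φ : Fin n → Fin n → ℂ}
    (hconn : G.Connected) (hφ : ∀ i j, G.Adj i j → ‖φ i j‖ = 1) {u v : Fin n} (huv : u ≠ v) :
    ‖phiMax G φ u v‖ = 1 := by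
  have hAux : ∀ a b : Fin n, ‖phiMaxAux G φ a b‖ = 1 := fun a b => by
    obtain ⟨p, -, hp⟩ := exists_walk_length_eq_dist_phiMaxAux_eq φ (hconn a b)
    rw [hp, norm_walkGain hφ]
  rw [phiMax, if_neg huv]
  split_ifs <;> simp [hAux]

theorem phiMax_swap {n : ℕ} (G : SimpleGraph (Fin n)) (φ : Fin n → Fin n → ℂ) (u v : Fin n) :
    phiMax G φ v u = conj (phiMax G φ u v) := by
  rcases lt_trichotomy u v with h | rfl | h
  · rw [phiMax, phiMax, if_neg h.ne', if_neg h.not_gt, if_neg h.ne, if_pos h]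
  · simp [phiMax]
  · rw [phiMax, phiMax, if_neg h.ne', if_pos h, if_neg h.ne, if_neg h.not_gt, Complex.conj_conj]

theorem DHmax_eq_gainIncidence {n : ℕ} (G : SimpleGraph (Fin n)) (φ : Fin n → Fin n → ℂ) :
    DHmax G φ = gainIncidence (fun j k => (G.dist j k : ℝ)) (phiMax G φ) :=
  rfl

theorem DLmax_eq_diagonal_sub {n : ℕ} (G : SimpleGraph (Fin n)) (φ : Fin n → Fin n → ℂ) :
    DLmax G φ = diagonal (fun j => ∑ k, ((G.dist j k : ℝ) : ℂ)) -
      of fun j k => phiMax G φ j k * ((G.dist j k : ℝ) : ℂ) := by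
  simp only [DLmax, TrM, Nat.cast_sum, Complex.ofReal_natCast]
  rfl

open Classical in
theorem DLmax_eq_DHmax_mul_transpose_general {n : ℕ}
    (G : SimpleGraph (Fin n)) (φ : Fin n → Fin n → ℂ)
    (hconn : G.Connected)
    (hφ1 : ∀ i j, G.Adj i j → ‖φ i j‖ = 1) :
    DLmax G φ = DHmax G φ * (DHmax G φ)ᴴ := by
  rw [DLmax_eq_diagonal_sub, DHmax_eq_gainIncidence,
    gainIncidence_mul_conjTranspose (fun _ _ => Nat.cast_nonneg _)
      (fun _ _ => by rw [SimpleGraph.dist_comm]) (fun _ => by simp) (phiMax_swap G φ)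
      (fun _ _ hjk => norm_phiMax hconn hφ1 hjk.ne)]

open Classical in
/-- For a connected complex unit gain graph, the maximum gain distance
Laplacian equals the maximum distance incidence matrix times its (conjugate) transpose. -/
theorem DLmax_eq_DHmax_mul_transpose {n : ℕ}
    (G : SimpleGraph (Fin n)) (φ : Fin n → Fin n → ℂ)
    (hconn : G.Connected)
    (hφ1 : ∀ i j, G.Adj i j → ‖φ i j‖ = 1)
    (hφ2 : ∀ i j, G.Adj i j → φ j i = (φ i j)⁻¹) :
    DLmax G φ = DHmax G φ * (DHmax G φ)ᴴ :=
  DLmax_eq_DHmax_mul_transpose_general G φ hconn hφ1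
end

section
/- For a connected complex unit gain graph Θ = (Σ,φ) on n vertices with vertex ordering <, the following are equivalent: (i) det(DL^max_<(Θ)) = 0; (ii) det(DL^min_<(Θ)) = 0; (iii) DL^max_<(Θ) = DL^min_<(Θ) and det of this common matrix is 0; (iv) Θ is balanced. -/
open Matrix Complex BigOperators

namespace GainDistanceAux

variable {n : ℕ} {G : SimpleGraph (Fin n)} {φ : Fin n → Fin n → ℂ}

lemma walkGain_nil {u : Fin n} : walkGain φ (SimpleGraph.Walk.nil : G.Walk u u) = 1 := rfl

lemma walkGain_cons {u x v : Fin n} (h : G.Adj u x) (p : G.Walk x v) :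
    walkGain φ (SimpleGraph.Walk.cons h p) = φ u x * walkGain φ p := rfl

lemma walkGain_append {u v w : Fin n} (p : G.Walk u v) (q : G.Walk v w) :
    walkGain φ (p.append q) = walkGain φ p * walkGain φ q := by
  induction p with
  | nil => simp [walkGain_nil, SimpleGraph.Walk.nil_append]
  | cons h p ih => simp [SimpleGraph.Walk.cons_append, walkGain_cons, ih, mul_assoc]

lemma abs_walkGain (hφ1 : ∀ i j, G.Adj i j → ‖φ i j‖ = 1)
    {u v : Fin n} (p : G.Walk u v) : ‖walkGain φ p‖ = 1 := by
  induction p with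
  | nil => simp [walkGain_nil]
  | cons h p ih => simp [walkGain_cons, _root_.map_mul, hφ1 _ _ h, ih]

lemma walkGain_ne_zero (hφ1 : ∀ i j, G.Adj i j → ‖φ i j‖ = 1)
    {u v : Fin n} (p : G.Walk u v) : walkGain φ p ≠ 0 := by
  intro h
  have := abs_walkGain (G := G) hφ1 p
  rw [h] at this; simp at this

/-- In a path of length ≥ 2 from a to b, the edge s(b,a) does not occur. -/
lemma edge_ends_not_mem {a b : Fin n} (p : G.Walk a b) (hp : p.IsPath)
    (hl : 2 ≤ p.length) (he : s(b, a) ∈ p.edges) : False := by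
  cases p with
  | nil => simp at he
  | cons h q =>
    rename_i x
    rw [SimpleGraph.Walk.cons_isPath_iff] at hp
    rw [SimpleGraph.Walk.edges_cons, List.mem_cons] at he
    rcases he with he | he
    · rw [Sym2.eq_iff] at he
      rcases he with ⟨hba, hax⟩ | ⟨hbx, _⟩
      · exact G.loopless.irrefl a (hax ▸ h)
      · subst hbx
        cases q with
        | nil => simp at hl
        | cons h' r =>
          have hq := hp.1
          rw [SimpleGraph.Walk.cons_isPath_iff] at hq
          exact hq.2 r.end_mem_support
    · exact hp.2 (q.snd_mem_support_of_mem_edges he)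


lemma split_walk {x u : Fin n} :
    ∀ (d : G.Walk x u), x ∈ d.support.tail →
    ∃ (e : G.Walk x x) (b : G.Walk x u),
      walkGain φ d = walkGain φ e * walkGain φ b ∧
      d.length = e.length + b.length ∧ 1 ≤ e.length ∧
      (b.length = 0 → d.support.count x = 2)
  | SimpleGraph.Walk.nil, hxd => by simp at hxd
  | SimpleGraph.Walk.cons h' d'', hxd => by
    rename_i y
    have hxd'' : x ∈ d''.support := by simpa using hxd
    refine ⟨SimpleGraph.Walk.cons h' (d''.takeUntil x hxd''), d''.dropUntil x hxd'', ?_, ?_, ?_, ?_⟩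
    · rw [walkGain_cons, walkGain_cons, mul_assoc, ← walkGain_append, d''.take_spec hxd'']
    · rw [SimpleGraph.Walk.length_cons, SimpleGraph.Walk.length_cons]
      have := congrArg SimpleGraph.Walk.length (d''.take_spec hxd'')
      rw [SimpleGraph.Walk.length_append] at this
      omega
    · rw [SimpleGraph.Walk.length_cons]; omega
    · intro hb0
      have hsupp : d''.support = (d''.takeUntil x hxd'').support
          ++ (d''.dropUntil x hxd'').support.tail := by
        conv_lhs => rw [← d''.take_spec hxd'']
        rw [SimpleGraph.Walk.support_append]
      have htail : (d''.dropUntil x hxd'').support.tail = [] := by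
        have := (d''.dropUntil x hxd'').length_support
        rw [hb0] at this
        have h2 := (d''.dropUntil x hxd'').support_eq_cons
        rcases hh : (d''.dropUntil x hxd'').support.tail with _ | ⟨a, l⟩
        · rfl
        · rw [h2, hh] at this; simp at this
      have hc1 : (d''.takeUntil x hxd'').support.count x = 1 :=
        d''.count_support_takeUntil_eq_one hxd''
      rw [SimpleGraph.Walk.support_cons, List.count_cons_self, hsupp, htail,
        List.append_nil, hc1]

lemma walkGain_closed (hφ1 : ∀ i j, G.Adj i j → ‖φ i j‖ = 1)
    (hφ2 : ∀ i j, G.Adj i j → φ j i = (φ i j)⁻¹) (hb : IsBalanced G φ) :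
    ∀ (N : ℕ) (u : Fin n) (c : G.Walk u u), c.length ≤ N → walkGain φ c = 1 := by
  intro N
  induction N with
  | zero =>
    intro u c hc
    cases c with
    | nil => rfl
    | cons h p => simp at hc
  | succ N ih =>
    intro u c hc
    by_cases hnd : c.support.tail.Nodup
    · cases c with
      | nil => rfl
      | cons h p =>
        rename_i v
        have hp : p.IsPath := by
          rw [SimpleGraph.Walk.isPath_def]
          simpa using hnd
        cases p with
        | nil => exact absurd h (G.loopless.irrefl u)
        | cons h' q =>
          rename_i y
          cases q with
          | nil =>
            rw [walkGain_cons, walkGain_cons, walkGain_nil, mul_one, hφ2 _ _ h,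
              mul_inv_cancel₀]
            intro h0
            have := hφ1 _ _ h
            rw [h0] at this; simp at this
          | cons h'' r =>
            apply hb
            rw [SimpleGraph.Walk.cons_isCycle_iff]
            refine ⟨hp, fun he => edge_ends_not_mem _ hp ?_ he⟩
            simp only [SimpleGraph.Walk.length_cons]
            omega
    · rw [← List.exists_duplicate_iff_not_nodup] at hnd
      obtain ⟨x, hdup⟩ := hnd
      rw [List.duplicate_iff_two_le_count] at hdup
      have hxt : x ∈ c.support.tail := by
        rw [← List.count_pos_iff]; omega
      have hx : x ∈ c.support := List.mem_of_mem_tail hxt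
      have hcount_a : (c.takeUntil x hx).support.count x = 1 :=
        c.count_support_takeUntil_eq_one hx
      have hsupp : c.support = (c.takeUntil x hx).support
          ++ (c.dropUntil x hx).support.tail := by
        conv_lhs => rw [← c.take_spec hx]
        rw [SimpleGraph.Walk.support_append]
      have hct : 2 ≤ c.support.count x := by
        rw [c.support_eq_cons, List.count_cons]
        omega
      have hxd : x ∈ (c.dropUntil x hx).support.tail := by
        rw [← List.count_pos_iff]
        rw [hsupp, List.count_append, hcount_a] at hct
        omega
      obtain ⟨e, b, hg, hl, he1, hcnt⟩ := split_walk (c.dropUntil x hx) hxd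
      have hgc : walkGain φ c = walkGain φ ((c.takeUntil x hx).append b) * walkGain φ e := by
        conv_lhs => rw [← c.take_spec hx]
        rw [walkGain_append, walkGain_append, hg]
        ring
      have hlc : c.length = (c.takeUntil x hx).length + e.length + b.length := by
        have := congrArg SimpleGraph.Walk.length (c.take_spec hx)
        rw [SimpleGraph.Walk.length_append] at this
        omega
      by_cases hpos : 1 ≤ (c.takeUntil x hx).length + b.length
      · rw [hgc, ih u ((c.takeUntil x hx).append b)
            (by rw [SimpleGraph.Walk.length_append]; omega),
          ih x e (by omega), mul_one]
      · have ha0 : (c.takeUntil x hx).length = 0 := by omega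
        have hb0 : b.length = 0 := by omega
        have hcnt2 := hcnt hb0
        -- takeUntil has support [u], so c.support.tail = (dropUntil).support.tail
        have hta : (c.takeUntil x hx).support = [u] := by
          have h1 := (c.takeUntil x hx).length_support
          rw [ha0] at h1
          have h2 := (c.takeUntil x hx).support_eq_cons
          rcases hh : (c.takeUntil x hx).support.tail with _ | ⟨a, l⟩
          · rw [h2, hh]
          · rw [h2, hh] at h1; simp at h1
        have : c.support.tail = (c.dropUntil x hx).support.tail := by
          rw [hsupp, hta]; rfl
        rw [this] at hdup
        rw [(c.dropUntil x hx).support_eq_cons, List.count_cons_self] at hcnt2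
        omega


lemma walkGain_reverse (hφ1 : ∀ i j, G.Adj i j → ‖φ i j‖ = 1)
    (hφ2 : ∀ i j, G.Adj i j → φ j i = (φ i j)⁻¹)
    {u v : Fin n} (p : G.Walk u v) :
    walkGain φ p.reverse = (walkGain φ p)⁻¹ := by
  induction p with
  | nil => simp [walkGain_nil]
  | cons h p ih =>
    rw [SimpleGraph.Walk.reverse_cons, walkGain_append, ih, walkGain_cons]
    simp only [walkGain_cons, walkGain_nil, mul_one]
    rw [hφ2 _ _ h, mul_inv, mul_comm]

lemma walkGain_length_one {u v : Fin n} (p : G.Walk u v) (hp : p.length = 1) :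
    walkGain φ p = φ u v := by
  cases p with
  | nil => simp at hp
  | cons h q =>
    cases q with
    | nil => simp [walkGain_cons, walkGain_nil]
    | cons h' q' => simp [SimpleGraph.Walk.length_cons] at hp

lemma walkGain_eq (hφ1 : ∀ i j, G.Adj i j → ‖φ i j‖ = 1)
    (hφ2 : ∀ i j, G.Adj i j → φ j i = (φ i j)⁻¹) (hb : IsBalanced G φ)
    {u v : Fin n} (p q : G.Walk u v) : walkGain φ p = walkGain φ q := by
  have h := walkGain_closed hφ1 hφ2 hb (p.append q.reverse).length u
    (p.append q.reverse) le_rfl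
  rw [walkGain_append, walkGain_reverse hφ1 hφ2] at h
  have hq := walkGain_ne_zero hφ1 q
  field_simp at h
  exact h

lemma lexMax_mem (S : Set ℂ) (hfin : S.Finite) (hne : S.Nonempty) :
    (⟨sSup (Complex.re '' S),
      sSup (Complex.im '' {z ∈ S | z.re = sSup (Complex.re '' S)})⟩ : ℂ) ∈ S := by
  obtain ⟨w, hwS, hw⟩ : sSup (Complex.re '' S) ∈ Complex.re '' S :=
    (hne.image _).csSup_mem (hfin.image _)
  have hTne : ({z ∈ S | z.re = sSup (Complex.re '' S)} : Set ℂ).Nonempty := ⟨w, hwS, hw⟩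
  have hTfin : ({z ∈ S | z.re = sSup (Complex.re '' S)} : Set ℂ).Finite :=
    hfin.subset (fun z hz => hz.1)
  obtain ⟨z, hzT, hz⟩ := (hTne.image Complex.im).csSup_mem (hTfin.image _)
  have : (⟨sSup (Complex.re '' S),
      sSup (Complex.im '' {z ∈ S | z.re = sSup (Complex.re '' S)})⟩ : ℂ) = z :=
    Complex.ext (by simpa using hzT.2.symm) (by simpa using hz.symm)
  rw [this]; exact hzT.1

lemma lexMin_mem (S : Set ℂ) (hfin : S.Finite) (hne : S.Nonempty) :
    (⟨sInf (Complex.re '' S),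
      sInf (Complex.im '' {z ∈ S | z.re = sInf (Complex.re '' S)})⟩ : ℂ) ∈ S := by
  obtain ⟨w, hwS, hw⟩ : sInf (Complex.re '' S) ∈ Complex.re '' S :=
    (hne.image _).csInf_mem (hfin.image _)
  have hTne : ({z ∈ S | z.re = sInf (Complex.re '' S)} : Set ℂ).Nonempty := ⟨w, hwS, hw⟩
  have hTfin : ({z ∈ S | z.re = sInf (Complex.re '' S)} : Set ℂ).Finite :=
    hfin.subset (fun z hz => hz.1)
  obtain ⟨z, hzT, hz⟩ := (hTne.image Complex.im).csInf_mem (hTfin.image _)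
  have : (⟨sInf (Complex.re '' S),
      sInf (Complex.im '' {z ∈ S | z.re = sInf (Complex.re '' S)})⟩ : ℂ) = z :=
    Complex.ext (by simpa using hzT.2.symm) (by simpa using hz.symm)
  rw [this]; exact hzT.1

lemma Sset_finite (u v : Fin n) :
    ({z | ∃ p : G.Walk u v, p.length = G.dist u v ∧ z = walkGain φ p} : Set ℂ).Finite := by
  have : ({z | ∃ p : G.Walk u v, p.length = G.dist u v ∧ z = walkGain φ p} : Set ℂ)
      = (fun p : G.Walk u v => walkGain φ p) '' {p | p.length = G.dist u v} := by
    ext z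
    constructor
    · rintro ⟨p, h1, h2⟩; exact ⟨p, h1, h2.symm⟩
    · rintro ⟨p, h1, h2⟩; exact ⟨p, h1, h2.symm⟩
  rw [this]
  haveI : DecidableEq (Fin n) := inferInstance
  haveI : G.LocallyFinite := fun v => Fintype.ofFinite _
  exact (Set.toFinite _).image _

lemma Sset_nonempty (hconn : G.Connected) (u v : Fin n) :
    ({z | ∃ p : G.Walk u v, p.length = G.dist u v ∧ z = walkGain φ p} : Set ℂ).Nonempty := by
  obtain ⟨p, hp⟩ := hconn.exists_walk_length_eq_dist u v
  exact ⟨walkGain φ p, p, hp, rfl⟩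

lemma phiMaxAux_mem (hconn : G.Connected) (u v : Fin n) :
    phiMaxAux G φ u v ∈
      ({z | ∃ p : G.Walk u v, p.length = G.dist u v ∧ z = walkGain φ p} : Set ℂ) :=
  lexMax_mem _ (Sset_finite u v) (Sset_nonempty hconn u v)

lemma phiMinAux_mem (hconn : G.Connected) (u v : Fin n) :
    phiMinAux G φ u v ∈
      ({z | ∃ p : G.Walk u v, p.length = G.dist u v ∧ z = walkGain φ p} : Set ℂ) :=
  lexMin_mem _ (Sset_finite u v) (Sset_nonempty hconn u v)


lemma conj_eq_inv {z : ℂ} (hz : ‖z‖ = 1) : (starRingEnd ℂ) z = z⁻¹ := by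
  have h1 : (starRingEnd ℂ) z * z = 1 := by
    rw [mul_comm, Complex.mul_conj, Complex.normSq_eq_norm_sq, hz]; norm_num
  exact eq_inv_of_mul_eq_one_left h1

lemma abs_phiMaxAux (hconn : G.Connected)
    (hφ1 : ∀ i j, G.Adj i j → ‖φ i j‖ = 1) (u v : Fin n) :
    ‖phiMaxAux G φ u v‖ = 1 := by
  obtain ⟨p, _, h2⟩ := phiMaxAux_mem (φ := φ) hconn u v
  rw [h2]; exact abs_walkGain hφ1 p

lemma abs_phiMinAux (hconn : G.Connected)
    (hφ1 : ∀ i j, G.Adj i j → ‖φ i j‖ = 1) (u v : Fin n) :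
    ‖phiMinAux G φ u v‖ = 1 := by
  obtain ⟨p, _, h2⟩ := phiMinAux_mem (φ := φ) hconn u v
  rw [h2]; exact abs_walkGain hφ1 p

lemma phiMaxAux_adj {u v : Fin n} (hconn : G.Connected) (h : G.Adj u v) :
    phiMaxAux G φ u v = φ u v := by
  obtain ⟨p, h1, h2⟩ := phiMaxAux_mem (φ := φ) hconn u v
  rw [SimpleGraph.dist_eq_one_iff_adj.mpr h] at h1
  rw [h2, walkGain_length_one p h1]

lemma phiMinAux_adj {u v : Fin n} (hconn : G.Connected) (h : G.Adj u v) :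
    phiMinAux G φ u v = φ u v := by
  obtain ⟨p, h1, h2⟩ := phiMinAux_mem (φ := φ) hconn u v
  rw [SimpleGraph.dist_eq_one_iff_adj.mpr h] at h1
  rw [h2, walkGain_length_one p h1]

lemma phiMax_conj (v t : Fin n) : phiMax G φ t v = (starRingEnd ℂ) (phiMax G φ v t) := by
  rcases lt_trichotomy v t with hlt | heq | hlt
  · simp [phiMax, hlt, hlt.ne, hlt.ne', not_lt_of_gt hlt]
  · subst heq; simp [phiMax]
  · simp [phiMax, hlt, hlt.ne, hlt.ne', not_lt_of_gt hlt]

lemma phiMin_conj (v t : Fin n) : phiMin G φ t v = (starRingEnd ℂ) (phiMin G φ v t) := by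
  rcases lt_trichotomy v t with hlt | heq | hlt
  · simp [phiMin, hlt, hlt.ne, hlt.ne', not_lt_of_gt hlt]
  · subst heq; simp [phiMin]
  · simp [phiMin, hlt, hlt.ne, hlt.ne', not_lt_of_gt hlt]

lemma abs_phiMax (hconn : G.Connected)
    (hφ1 : ∀ i j, G.Adj i j → ‖φ i j‖ = 1) {v t : Fin n} (h : v ≠ t) :
    ‖phiMax G φ v t‖ = 1 := by
  rcases lt_or_gt_of_ne h with hlt | hlt
  · simp only [phiMax, h, if_false, hlt, if_true]
    exact abs_phiMaxAux hconn hφ1 v t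
  · simp only [phiMax, h, if_false, not_lt_of_gt hlt, Complex.norm_conj]
    exact abs_phiMaxAux hconn hφ1 t v

lemma abs_phiMin (hconn : G.Connected)
    (hφ1 : ∀ i j, G.Adj i j → ‖φ i j‖ = 1) {v t : Fin n} (h : v ≠ t) :
    ‖phiMin G φ v t‖ = 1 := by
  rcases lt_or_gt_of_ne h with hlt | hlt
  · simp only [phiMin, h, if_false, hlt, if_true]
    exact abs_phiMinAux hconn hφ1 v t
  · simp only [phiMin, h, if_false, not_lt_of_gt hlt, Complex.norm_conj]
    exact abs_phiMinAux hconn hφ1 t v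

lemma phiMax_adj (hconn : G.Connected)
    (hφ1 : ∀ i j, G.Adj i j → ‖φ i j‖ = 1)
    (hφ2 : ∀ i j, G.Adj i j → φ j i = (φ i j)⁻¹)
    {v t : Fin n} (h : G.Adj v t) : phiMax G φ v t = φ v t := by
  rcases lt_or_gt_of_ne h.ne with hlt | hlt
  · simp only [phiMax, h.ne, if_false, hlt, if_true]
    exact phiMaxAux_adj hconn h
  · simp only [phiMax, h.ne, if_false, not_lt_of_gt hlt]
    rw [phiMaxAux_adj hconn h.symm, hφ2 _ _ h, map_inv₀, conj_eq_inv (hφ1 _ _ h), inv_inv]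

lemma phiMin_adj (hconn : G.Connected)
    (hφ1 : ∀ i j, G.Adj i j → ‖φ i j‖ = 1)
    (hφ2 : ∀ i j, G.Adj i j → φ j i = (φ i j)⁻¹)
    {v t : Fin n} (h : G.Adj v t) : phiMin G φ v t = φ v t := by
  rcases lt_or_gt_of_ne h.ne with hlt | hlt
  · simp only [phiMin, h.ne, if_false, hlt, if_true]
    exact phiMinAux_adj hconn h
  · simp only [phiMin, h.ne, if_false, not_lt_of_gt hlt]
    rw [phiMinAux_adj hconn h.symm, hφ2 _ _ h, map_inv₀, conj_eq_inv (hφ1 _ _ h), inv_inv]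


lemma balanced_of_det_zero (hconn : G.Connected)
    (hφ1 : ∀ i j, G.Adj i j → ‖φ i j‖ = 1)
    (g : Fin n → Fin n → ℂ)
    (hg1 : ∀ v t, v ≠ t → ‖g v t‖ = 1)
    (hgadj : ∀ v t, G.Adj v t → g v t = φ v t)
    (D : Matrix (Fin n) (Fin n) ℂ)
    (hD : ∀ s t, D s t = g s t * (G.dist s t : ℂ))
    (hdet : (TrM G - D).det = 0) : IsBalanced G φ := by
  classical
  obtain ⟨x, hx0, hxv⟩ := Matrix.exists_mulVec_eq_zero_iff.mpr hdet
  rw [Matrix.sub_mulVec] at hxv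
  have hrow : ∀ v, ∑ t, D v t * x t = ((∑ u, G.dist v u : ℕ) : ℂ) * x v := by
    intro v
    have h := congrFun hxv v
    rw [Pi.sub_apply] at h
    have h1 : (TrM G *ᵥ x) v = ((∑ u, G.dist v u : ℕ) : ℂ) * x v := by
      simp [TrM, Matrix.mulVec_diagonal]
    have h2 : (D *ᵥ x) v = ∑ t, D v t * x t := by
      simp [Matrix.mulVec, dotProduct]
    rw [Pi.zero_apply, h1, h2, sub_eq_zero] at h
    exact h.symm
  set d' : Fin n → Fin n → ℝ := fun v t => (G.dist v t : ℝ) with hd'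
  set Nq : Fin n → ℝ := fun v => Complex.normSq (x v) with hNq
  set T : Fin n → ℝ := fun v => ∑ t, d' v t with hT
  have key4 : ∀ v, ∑ t, d' v t * (x v * (starRingEnd ℂ) (g v t * x t)).re
      = T v * Nq v := by
    intro v
    have e1 : ∀ t, d' v t * (x v * (starRingEnd ℂ) (g v t * x t)).re
        = (x v * (starRingEnd ℂ) (D v t * x t)).re := by
      intro t
      rw [hD]
      simp only [_root_.map_mul, Complex.conj_natCast]
      have e2 : x v * ((starRingEnd ℂ) (g v t) * (G.dist v t : ℂ)
            * (starRingEnd ℂ) (x t))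
          = (x v * ((starRingEnd ℂ) (g v t) * (starRingEnd ℂ) (x t)))
            * (G.dist v t : ℂ) := by ring
      rw [e2, Complex.mul_re]
      simp [hd']
      ring
    rw [Finset.sum_congr rfl (fun t _ => e1 t), ← Complex.re_sum]
    have e3 : ∑ t, x v * (starRingEnd ℂ) (D v t * x t)
        = x v * (starRingEnd ℂ) (∑ t, D v t * x t) := by
      rw [map_sum, Finset.mul_sum]
    rw [e3, hrow v, _root_.map_mul, Complex.conj_natCast]
    have e4 : x v * ((((∑ u, G.dist v u : ℕ)) : ℂ) * (starRingEnd ℂ) (x v))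
        = (((∑ u, G.dist v u : ℕ)) : ℂ) * (x v * (starRingEnd ℂ) (x v)) := by ring
    rw [e4, Complex.mul_conj, Complex.mul_re]
    simp [hT, hNq, hd']
  have key1 : ∀ v t, d' v t * Complex.normSq (x v - g v t * x t)
      = d' v t * Nq v + d' v t * Nq t
        - 2 * (d' v t * (x v * (starRingEnd ℂ) (g v t * x t)).re) := by
    intro v t
    by_cases hvt : v = t
    · subst hvt; simp [hd', SimpleGraph.dist_self]
    · rw [Complex.normSq_sub]
      have habs : Complex.normSq (g v t * x t) = Complex.normSq (x t) := by
        rw [Complex.normSq_mul, ← Complex.sq_norm (g v t), hg1 v t hvt]; ring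
      rw [habs]; ring
  have hQ : ∑ v, ∑ t, d' v t * Complex.normSq (x v - g v t * x t) = 0 := by
    have e5 : ∀ v, ∑ t, d' v t * Complex.normSq (x v - g v t * x t)
        = T v * Nq v + (∑ t, d' v t * Nq t) - 2 * (T v * Nq v) := by
      intro v
      rw [Finset.sum_congr rfl (fun t _ => key1 v t)]
      rw [Finset.sum_sub_distrib, Finset.sum_add_distrib]
      rw [← Finset.sum_mul, ← Finset.mul_sum, key4 v]
    rw [Finset.sum_congr rfl (fun v _ => e5 v)]
    rw [Finset.sum_sub_distrib, Finset.sum_add_distrib]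
    have e6 : ∑ v, ∑ t, d' v t * Nq t = ∑ v, T v * Nq v := by
      rw [Finset.sum_comm]
      refine Finset.sum_congr rfl (fun t _ => ?_)
      rw [← Finset.sum_mul]
      congr 1
      refine Finset.sum_congr rfl (fun v _ => ?_)
      simp [hd', SimpleGraph.dist_comm]
    rw [e6, ← Finset.mul_sum]
    ring
  have hterm0 : ∀ v t, d' v t * Complex.normSq (x v - g v t * x t) = 0 := by
    have hnn : ∀ v t, 0 ≤ d' v t * Complex.normSq (x v - g v t * x t) := by
      intro v t
      exact mul_nonneg (by positivity) (Complex.normSq_nonneg _)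
    intro v t
    have houter := (Finset.sum_eq_zero_iff_of_nonneg
      (fun v _ => Finset.sum_nonneg (fun t _ => hnn v t))).mp hQ v (Finset.mem_univ v)
    exact (Finset.sum_eq_zero_iff_of_nonneg (fun t _ => hnn v t)).mp houter t
      (Finset.mem_univ t)
  have hrel : ∀ v t, v ≠ t → x v = g v t * x t := by
    intro v t hvt
    have hdpos : (0:ℝ) < d' v t := by
      simp only [hd']
      exact_mod_cast hconn.pos_dist_of_ne hvt
    have h0 : Complex.normSq (x v - g v t * x t) = 0 := by
      rcases mul_eq_zero.mp (hterm0 v t) with h | h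
      · exact absurd h hdpos.ne'
      · exact h
    have := Complex.normSq_eq_zero.mp h0
    exact sub_eq_zero.mp this
  obtain ⟨v0, hv0'⟩ := Function.ne_iff.mp hx0
  have hv0 : x v0 ≠ 0 := hv0'
  have hxall : ∀ w, x w ≠ 0 := by
    intro w
    by_cases hw : w = v0
    · subst hw; exact hv0
    · intro hxw
      have := hrel v0 w (fun h => hw h.symm)
      rw [hxw, mul_zero] at this
      exact hv0 this
  have hwalk : ∀ (u v : Fin n) (p : G.Walk u v), x u = walkGain φ p * x v := by
    intro u v p
    induction p with
    | nil => rw [walkGain_nil, one_mul]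
    | cons h p ih =>
      rw [walkGain_cons, mul_assoc, ← ih, ← hgadj _ _ h]
      exact hrel _ _ h.ne
  intro u c _
  have := hwalk u u c
  have h1 : walkGain φ c * x u = 1 * x u := by rw [one_mul]; exact this.symm
  exact mul_right_cancel₀ (hxall u) h1


lemma balanced_side (hconn : G.Connected)
    (hφ1 : ∀ i j, G.Adj i j → ‖φ i j‖ = 1)
    (hφ2 : ∀ i j, G.Adj i j → φ j i = (φ i j)⁻¹)
    (hb : IsBalanced G φ) :
    DLmax G φ = DLmin G φ ∧ (DLmax G φ).det = 0 := by
  classical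
  set γ : Fin n → Fin n → ℂ := fun u v => walkGain φ ((hconn.preconnected u v).some)
    with hγdef
  have hγeq : ∀ (u v : Fin n) (p : G.Walk u v), walkGain φ p = γ u v :=
    fun u v p => walkGain_eq hφ1 hφ2 hb p _
  have hγmul : ∀ u v w : Fin n, γ u v * γ v w = γ u w := by
    intro u v w
    calc γ u v * γ v w
        = walkGain φ (((hconn.preconnected u v).some).append
            ((hconn.preconnected v w).some)) := by rw [walkGain_append]
      _ = γ u w := hγeq _ _ _
  have hγnil : ∀ u : Fin n, γ u u = 1 :=
    fun u => (hγeq u u SimpleGraph.Walk.nil).symm.trans walkGain_nil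
  have habsγ : ∀ u v : Fin n, ‖γ u v‖ = 1 := fun u v => abs_walkGain hφ1 _
  have hγconj : ∀ u v : Fin n, (starRingEnd ℂ) (γ u v) = γ v u := by
    intro u v
    rw [conj_eq_inv (habsγ u v)]
    have h1 : γ v u * γ u v = 1 := (hγmul v u v).trans (hγnil v)
    exact (eq_inv_of_mul_eq_one_left h1).symm
  have hMaxAux : ∀ u v : Fin n, phiMaxAux G φ u v = γ u v := by
    intro u v
    obtain ⟨p, _, h2⟩ := phiMaxAux_mem (φ := φ) hconn u v
    rw [h2, hγeq]
  have hMinAux : ∀ u v : Fin n, phiMinAux G φ u v = γ u v := by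
    intro u v
    obtain ⟨p, _, h2⟩ := phiMinAux_mem (φ := φ) hconn u v
    rw [h2, hγeq]
  have hMax : ∀ u v : Fin n, u ≠ v → phiMax G φ u v = γ u v := by
    intro u v h
    rcases lt_or_gt_of_ne h with hlt | hlt
    · simp only [phiMax, h, if_false, hlt, if_true, hMaxAux]
    · simp only [phiMax, h, if_false, not_lt_of_gt hlt, if_false, hMaxAux, hγconj]
  have hMin : ∀ u v : Fin n, u ≠ v → phiMin G φ u v = γ u v := by
    intro u v h
    rcases lt_or_gt_of_ne h with hlt | hlt
    · simp only [phiMin, h, if_false, hlt, if_true, hMinAux]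
    · simp only [phiMin, h, if_false, not_lt_of_gt hlt, if_false, hMinAux, hγconj]
  have hDeq : Dmax G φ = Dmin G φ := by
    funext s t
    by_cases hst : s = t
    · subst hst
      show phiMax G φ s s * (G.dist s s : ℂ) = phiMin G φ s s * (G.dist s s : ℂ)
      simp [phiMax, phiMin]
    · show phiMax G φ s t * (G.dist s t : ℂ) = phiMin G φ s t * (G.dist s t : ℂ)
      rw [hMax s t hst, hMin s t hst]
  obtain ⟨r⟩ := hconn.nonempty
  set x : Fin n → ℂ := fun v => γ v r with hx
  have hx0 : x ≠ 0 := by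
    intro h
    have h1 : γ r r = 0 := congrFun h r
    rw [hγnil r] at h1
    exact one_ne_zero h1
  have hker : DLmax G φ *ᵥ x = 0 := by
    funext v
    have hterm : ∀ t, Dmax G φ v t * x t = (G.dist v t : ℂ) * x v := by
      intro t
      by_cases hvt : v = t
      · subst hvt
        show phiMax G φ v v * (G.dist v v : ℂ) * x v = (G.dist v v : ℂ) * x v
        simp [SimpleGraph.dist_self]
      · show phiMax G φ v t * (G.dist v t : ℂ) * x t = (G.dist v t : ℂ) * x v
        have h3 : γ v t * x t = x v := hγmul v t r
        rw [hMax v t hvt, mul_comm (γ v t) ((G.dist v t : ℂ)), mul_assoc, h3]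
    show ((TrM G - Dmax G φ) *ᵥ x) v = 0
    rw [Matrix.sub_mulVec, Pi.sub_apply]
    have h1 : (TrM G *ᵥ x) v = ((∑ u, G.dist v u : ℕ) : ℂ) * x v := by
      simp [TrM, Matrix.mulVec_diagonal]
    have h2 : (Dmax G φ *ᵥ x) v = ∑ t, Dmax G φ v t * x t := by
      simp [Matrix.mulVec, dotProduct]
    rw [h1, h2, Finset.sum_congr rfl (fun t _ => hterm t), ← Finset.sum_mul]
    push_cast
    ring
  exact ⟨show TrM G - Dmax G φ = TrM G - Dmin G φ by rw [hDeq],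
    Matrix.exists_mulVec_eq_zero_iff.mp ⟨x, hx0, hker⟩⟩


end GainDistanceAux

/-- For a connected complex unit gain graph the following are equivalent:
det DL^max = 0; det DL^min = 0; DL^max = DL^min with determinant 0; Θ is balanced. -/
theorem det_gain_distance_laplacian_tfae {n : ℕ}
    (G : SimpleGraph (Fin n)) (φ : Fin n → Fin n → ℂ)
    (hconn : G.Connected)
    (hφ1 : ∀ i j, G.Adj i j → ‖φ i j‖ = 1)
    (hφ2 : ∀ i j, G.Adj i j → φ j i = (φ i j)⁻¹) :
    [(DLmax G φ).det = 0,
     (DLmin G φ).det = 0,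
     DLmax G φ = DLmin G φ ∧ (DLmax G φ).det = 0,
     IsBalanced G φ].TFAE := by
  tfae_have 4 → 3 := fun hb => GainDistanceAux.balanced_side hconn hφ1 hφ2 hb
  tfae_have 3 → 1 := fun h => h.2
  tfae_have 3 → 2 := fun h => h.1 ▸ h.2
  tfae_have 1 → 4 := fun h => GainDistanceAux.balanced_of_det_zero hconn hφ1 (phiMax G φ)
      (fun v t hvt => GainDistanceAux.abs_phiMax hconn hφ1 hvt)
      (fun v t hadj => GainDistanceAux.phiMax_adj hconn hφ1 hφ2 hadj)
      (Dmax G φ) (fun s t => rfl) h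
  tfae_have 2 → 4 := fun h => GainDistanceAux.balanced_of_det_zero hconn hφ1 (phiMin G φ)
      (fun v t hvt => GainDistanceAux.abs_phiMin hconn hφ1 hvt)
      (fun v t hadj => GainDistanceAux.phiMin_adj hconn hφ1 hφ2 hadj)
      (Dmin G φ) (fun s t => rfl) h
  tfae_finish
end
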